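/- Let n be a real number with n ≥ 1/2, and define K on the open set U = {(x, y) ∈ ℝ² : |y| < x} by K(x, y) = 1/(x² − y²)ⁿ. Then the Hessian matrix of K (the 2×2 matrix of second partial derivatives) is positive semidefinite at every point of U. -/

import Mathlib

/-- Partial derivative with respect to the first variable. -/
noncomputable def pdx (f : ℝ × ℝ → ℝ) (p : ℝ × ℝ) : ℝ := fderiv ℝ f p (1, 0)

/-- Partial derivative with respect to the second variable. -/
noncomputable def pdy (f : ℝ × ℝ → ℝ) (p : ℝ × ℝ) : ℝ := fderiv ℝ f p (0, 1)

/-- The Hessian matrix of second partial derivatives. -/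
noncomputable def hessian (f : ℝ × ℝ → ℝ) (p : ℝ × ℝ) : Matrix (Fin 2) (Fin 2) ℝ :=
  !![pdx (pdx f) p, pdx (pdy f) p;
     pdy (pdx f) p, pdy (pdy f) p]

/-!
With `u = x² - y²`, the Hessian of `u ^ e` on `{u > 0}` is `-2 e u ^ (e - 2)` times a symmetric
matrix with nonnegative diagonal (for `e ≤ 1/2`) and determinant `(1 - 2e) u²`; so for `e ≤ 0` it
is positive semidefinite, and `K = u ^ (-n)` there.
-/

open Filter Topology ContinuousLinearMap

theorem Matrix.posSemidef_fin_two {a b c : ℝ} (ha : 0 ≤ a) (hc : 0 ≤ c) (hdet : b ^ 2 ≤ a * c) :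
    !![a, b; b, c].PosSemidef := by
  refine Matrix.PosSemidef.of_dotProduct_mulVec_nonneg ?_ fun z => ?_
  · ext i j
    fin_cases i <;> fin_cases j <;> rfl
  · simp only [star_trivial, Matrix.mulVec, dotProduct, Fin.sum_univ_two, Fin.isValue,
      Matrix.of_apply, Matrix.cons_val', Matrix.cons_val_zero, Matrix.cons_val_fin_one,
      Matrix.cons_val_one]
    rcases ha.lt_or_eq with ha | rfl
    · nlinarith [sq_nonneg (a * z 0 + b * z 1), mul_nonneg (sub_nonneg.2 hdet) (sq_nonneg (z 1))]
    · have hb : b = 0 := by nlinarith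
      subst hb
      nlinarith [mul_nonneg hc (sq_nonneg (z 1))]

section PartialDerivatives

variable {f g : ℝ × ℝ → ℝ} {p : ℝ × ℝ}

theorem HasFDerivAt.pdx_eq {f' : ℝ × ℝ →L[ℝ] ℝ} (h : HasFDerivAt f f' p) :
    pdx f p = f' (1, 0) := by
  rw [pdx, h.fderiv]

theorem HasFDerivAt.pdy_eq {f' : ℝ × ℝ →L[ℝ] ℝ} (h : HasFDerivAt f f' p) :
    pdy f p = f' (0, 1) := by
  rw [pdy, h.fderiv]

theorem Filter.EventuallyEq.pdx_eq (h : f =ᶠ[𝓝 p] g) : pdx f p = pdx g p := by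
  rw [pdx, h.fderiv_eq, pdx]

theorem Filter.EventuallyEq.pdy_eq (h : f =ᶠ[𝓝 p] g) : pdy f p = pdy g p := by
  rw [pdy, h.fderiv_eq, pdy]

theorem Filter.EventuallyEq.hessian_eq (h : f =ᶠ[𝓝 p] g) : hessian f p = hessian g p := by
  have hx : pdx f =ᶠ[𝓝 p] pdx g := h.eventuallyEq_nhds.mono fun _ => Filter.EventuallyEq.pdx_eq
  have hy : pdy f =ᶠ[𝓝 p] pdy g := h.eventuallyEq_nhds.mono fun _ => Filter.EventuallyEq.pdy_eq
  rw [hessian, hessian, hx.pdx_eq, hx.pdy_eq, hy.pdx_eq, hy.pdy_eq]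

end PartialDerivatives

section SqSubSq

variable {p : ℝ × ℝ}

theorem eventually_sq_sub_sq_pos (hp : 0 < p.1 ^ 2 - p.2 ^ 2) :
    ∀ᶠ q in 𝓝 p, 0 < q.1 ^ 2 - q.2 ^ 2 :=
  continuousAt_const.eventually_lt (by fun_prop) hp

theorem hasFDerivAt_sq_sub_sq (p : ℝ × ℝ) :
    HasFDerivAt (fun q : ℝ × ℝ => q.1 ^ 2 - q.2 ^ 2)
      ((2 * p.1) • fst ℝ ℝ ℝ - (2 * p.2) • snd ℝ ℝ ℝ) p := by
  have h := ((hasFDerivAt_fst (𝕜 := ℝ) (E := ℝ) (F := ℝ) (p := p)).pow 2).sub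
    ((hasFDerivAt_snd (𝕜 := ℝ) (E := ℝ) (F := ℝ) (p := p)).pow 2)
  exact h.congr_fderiv (by simp [nsmul_eq_mul])

theorem hasFDerivAt_rpow_sq_sub_sq (e : ℝ) (hp : p.1 ^ 2 - p.2 ^ 2 ≠ 0) :
    HasFDerivAt (fun q : ℝ × ℝ => (q.1 ^ 2 - q.2 ^ 2) ^ e)
      ((e * (p.1 ^ 2 - p.2 ^ 2) ^ (e - 1)) • ((2 * p.1) • fst ℝ ℝ ℝ - (2 * p.2) • snd ℝ ℝ ℝ)) p :=
  (hasFDerivAt_sq_sub_sq p).rpow_const (.inl hp)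

theorem pdx_rpow_sq_sub_sq (e : ℝ) (hp : p.1 ^ 2 - p.2 ^ 2 ≠ 0) :
    pdx (fun q : ℝ × ℝ => (q.1 ^ 2 - q.2 ^ 2) ^ e) p =
      2 * e * p.1 * (p.1 ^ 2 - p.2 ^ 2) ^ (e - 1) := by
  rw [(hasFDerivAt_rpow_sq_sub_sq e hp).pdx_eq]
  simp only [smul_apply, sub_apply, coe_fst', coe_snd', smul_eq_mul, mul_one, mul_zero, sub_zero]
  ring

theorem pdy_rpow_sq_sub_sq (e : ℝ) (hp : p.1 ^ 2 - p.2 ^ 2 ≠ 0) :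
    pdy (fun q : ℝ × ℝ => (q.1 ^ 2 - q.2 ^ 2) ^ e) p =
      -2 * e * p.2 * (p.1 ^ 2 - p.2 ^ 2) ^ (e - 1) := by
  rw [(hasFDerivAt_rpow_sq_sub_sq e hp).pdy_eq]
  simp only [smul_apply, sub_apply, coe_fst', coe_snd', smul_eq_mul, mul_one, mul_zero, zero_sub]
  ring

theorem hessian_rpow_sq_sub_sq (e : ℝ) (hp : 0 < p.1 ^ 2 - p.2 ^ 2) :
    hessian (fun q : ℝ × ℝ => (q.1 ^ 2 - q.2 ^ 2) ^ e) p =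
      (-2 * e * (p.1 ^ 2 - p.2 ^ 2) ^ (e - 2)) •
        !![(1 - 2 * e) * p.1 ^ 2 + p.2 ^ 2, -(2 * (1 - e) * p.1 * p.2);
           -(2 * (1 - e) * p.1 * p.2), p.1 ^ 2 + (1 - 2 * e) * p.2 ^ 2] := by
  have hx : pdx (fun q : ℝ × ℝ => (q.1 ^ 2 - q.2 ^ 2) ^ e) =ᶠ[𝓝 p]
      fun q => 2 * e * q.1 * (q.1 ^ 2 - q.2 ^ 2) ^ (e - 1) :=
    (eventually_sq_sub_sq_pos hp).mono fun q hq => pdx_rpow_sq_sub_sq e hq.ne'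
  have hy : pdy (fun q : ℝ × ℝ => (q.1 ^ 2 - q.2 ^ 2) ^ e) =ᶠ[𝓝 p]
      fun q => -2 * e * q.2 * (q.1 ^ 2 - q.2 ^ 2) ^ (e - 1) :=
    (eventually_sq_sub_sq_pos hp).mono fun q hq => pdy_rpow_sq_sub_sq e hq.ne'
  have hu := hasFDerivAt_rpow_sq_sub_sq (e - 1) hp.ne'
  have hgx : HasFDerivAt (fun q : ℝ × ℝ => 2 * e * q.1 * (q.1 ^ 2 - q.2 ^ 2) ^ (e - 1)) _ p :=
    ((hasFDerivAt_fst (p := p)).const_mul (2 * e)).mul hu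
  have hgy : HasFDerivAt (fun q : ℝ × ℝ => -2 * e * q.2 * (q.1 ^ 2 - q.2 ^ 2) ^ (e - 1)) _ p :=
    ((hasFDerivAt_snd (p := p)).const_mul (-2 * e)).mul hu
  have hsplit : (p.1 ^ 2 - p.2 ^ 2) ^ (e - 1) =
      (p.1 ^ 2 - p.2 ^ 2) ^ (e - 2) * (p.1 ^ 2 - p.2 ^ 2) := by
    rw [← Real.rpow_add_one hp.ne']; ring_nf
  have hsub : e - 1 - 1 = e - 2 := by ring
  rw [hessian, hx.pdx_eq, hx.pdy_eq, hy.pdx_eq, hy.pdy_eq, hgx.pdx_eq, hgx.pdy_eq, hgy.pdx_eq,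
    hgy.pdy_eq, hsub, hsplit]
  ext i j
  fin_cases i <;> fin_cases j <;>
    simp only [add_apply, smul_apply, sub_apply, coe_fst', coe_snd', smul_eq_mul,
      Fin.zero_eta, Fin.mk_one, Fin.isValue, Matrix.of_apply, Matrix.smul_apply, Matrix.cons_val',
      Matrix.cons_val_zero, Matrix.cons_val_one, Matrix.cons_val_fin_one] <;>
    ring

theorem posSemidef_hessian_rpow_sq_sub_sq {e : ℝ} (he : e ≤ 0) (hp : 0 < p.1 ^ 2 - p.2 ^ 2) :
    (hessian (fun q : ℝ × ℝ => (q.1 ^ 2 - q.2 ^ 2) ^ e) p).PosSemidef := by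
  rw [hessian_rpow_sq_sub_sq e hp]
  have hcoef : 0 ≤ 1 - 2 * e := by linarith
  refine (Matrix.posSemidef_fin_two (by positivity) (by positivity) ?_).smul
    (mul_nonneg (by linarith) (Real.rpow_nonneg hp.le _))
  nlinarith [mul_nonneg hcoef (sq_nonneg (p.1 ^ 2 - p.2 ^ 2))]

end SqSubSq

theorem powers_of_gauss_curvature_convex (n : ℝ) (hn : (1 : ℝ) / 2 ≤ n)
    (K : ℝ × ℝ → ℝ)
    (hK : K = fun q : ℝ × ℝ => 1 / (q.1 ^ 2 - q.2 ^ 2) ^ n) :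
    ∀ p : ℝ × ℝ, |p.2| < p.1 → (hessian K p).PosSemidef := by
  subst hK
  intro p hp
  have hu : 0 < p.1 ^ 2 - p.2 ^ 2 := sub_pos.2 (sq_lt_sq' (abs_lt.1 hp).1 (abs_lt.1 hp).2)
  have hK : (fun q : ℝ × ℝ => 1 / (q.1 ^ 2 - q.2 ^ 2) ^ n) =ᶠ[𝓝 p]
      fun q : ℝ × ℝ => (q.1 ^ 2 - q.2 ^ 2) ^ (-n) :=
    (eventually_sq_sub_sq_pos hu).mono fun q hq => by simp only [Real.rpow_neg hq.le, one_div]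
  rw [hK.hessian_eq]
  exact posSemidef_hessian_rpow_sq_sub_sq (by linarith) hu
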